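/- For each s > 0 there exists F ∈ ℬ_c(ℝ) such that limsup_{h→0⁺} |Ω_F(s+h) − Ω_F(s)| / (h·|log h|^{1/2}) = ∞. In particular, there exists F ∈ ℬ_c(ℝ) such that Ω_F is not Lipschitz continuous. -/

import Mathlib

open MeasureTheory Filter Topology

noncomputable def v (s t : ℝ) : ℂ :=
  if t = 0 then (s:ℂ)^2/2
  else (1 - Complex.I*(s:ℂ)*(t:ℂ) - Complex.exp (-Complex.I*(s:ℂ)*(t:ℂ)))/(t:ℂ)^2

noncomputable def vd (s t : ℝ) : ℂ :=
  if t = 0 then 0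
  else (Complex.I*(s:ℂ)*Complex.exp (-Complex.I*(s:ℂ)*(t:ℂ)) - Complex.I*(s:ℂ))/(t:ℂ)^2
    - 2*(1 - Complex.I*(s:ℂ)*(t:ℂ) - Complex.exp (-Complex.I*(s:ℂ)*(t:ℂ)))/(t:ℂ)^3

def BcR (F : ℝ → ℂ) : Prop :=
  Continuous F ∧ Tendsto F atBot (𝓝 0) ∧ ∃ L : ℂ, Tendsto F atTop (𝓝 L)

noncomputable def Om (F : ℝ → ℂ) (s : ℝ) : ℂ := -∫ t : ℝ, F t * vd s t

/-!
Take `F(t) = e^{ist} ρ(t)` with `ρ(t) = (log t)^{-1/4}` for large `t`, cut off continuously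
so that it vanishes for `t ≤ 1`. After demodulation by `e^{ist}`, `v_s' - v_{s+h}'` is
`i s (1 - e^{-iht}) / t²` up to `O(|h| / t²)`, so
`Ω_F(s+h) - Ω_F(s) = i s ∫_{t>1} ρ(t) (1 - e^{-iht}) / t² dt + O(|h|)`.
The imaginary part of that integral is `∫ ρ(t) sin(ht) / t²`: on `[1, 1/h]` we have
`sin(ht) ≥ ht/2` and the tail is `O(h)`, so it is at least
`(h/2) ∫_1^{1/h} ρ(t)/t dt - h ≳ h |log h|^{3/4}`, which beats `h |log h|^{1/2}`.
-/

open Set Real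
open scoped Complex

lemma norm_cexp_neg_I_mul (a b : ℝ) : ‖cexp (-Complex.I * a * b)‖ = 1 := by
  rw [show -Complex.I * a * b = Complex.I * ↑(-(a * b)) by push_cast; ring]
  exact Complex.norm_exp_I_mul_ofReal _

lemma norm_cexp_I_mul (a b : ℝ) : ‖cexp (Complex.I * a * b)‖ = 1 := by
  simpa using norm_cexp_neg_I_mul (-a) b

lemma norm_one_sub_cexp_neg_I_mul_le (a b : ℝ) :
    ‖1 - cexp (-Complex.I * a * b)‖ ≤ |a * b| := by
  rw [show -Complex.I * a * b = Complex.I * ↑(-(a * b)) by push_cast; ring, norm_sub_rev]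
  simpa using Real.norm_exp_I_mul_ofReal_sub_one_le (x := -(a * b))

lemma im_one_sub_cexp_neg_I_mul (a b : ℝ) : (1 - cexp (-Complex.I * a * b)).im = sin (a * b) := by
  rw [show -Complex.I * a * b = ↑(-(a * b)) * Complex.I by push_cast; ring, Complex.sub_im,
    Complex.exp_ofReal_mul_I_im]
  simp

lemma half_le_sin {x : ℝ} (hx0 : 0 ≤ x) (hx1 : x ≤ 1) : x / 2 ≤ sin x := by
  have hπ : 2 / π * x ≤ sin x := mul_le_sin hx0 (by linarith [pi_gt_three])
  have : 1 / 2 ≤ 2 / π := by rw [div_le_div_iff₀ two_pos pi_pos]; linarith [pi_lt_four]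
  nlinarith

lemma one_le_log_of_exp_one_le {x : ℝ} (hx : exp 1 ≤ x) : 1 ≤ log x :=
  (log_exp 1).ge.trans (log_le_log (exp_pos 1) hx)

section InverseSquare

variable {c : ℝ}

lemma integrableOn_Ioi_div_sq (hc : 0 < c) (C : ℝ) :
    IntegrableOn (fun t : ℝ => C / t ^ 2) (Ioi c) := by
  refine IntegrableOn.congr_fun
    ((integrableOn_Ioi_rpow_of_lt (by norm_num : (-2 : ℝ) < -1) hc).const_mul C)
    (fun t ht => ?_) measurableSet_Ioi
  simp only [rpow_neg (le_of_lt (hc.trans ht)), rpow_two, div_eq_mul_inv]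

lemma integral_Ioi_div_sq (hc : 0 < c) (C : ℝ) : ∫ t in Ioi c, C / t ^ 2 = C / c := by
  have hsq : EqOn (fun t : ℝ => C * t ^ (-2 : ℝ)) (fun t => C / t ^ 2) (Ioi c) := fun t ht => by
    simp only [rpow_neg (le_of_lt (hc.trans ht)), rpow_two, div_eq_mul_inv]
  rw [← setIntegral_congr_fun measurableSet_Ioi hsq, integral_const_mul,
    integral_Ioi_rpow_of_lt (by norm_num) hc]
  norm_num [rpow_neg_one, div_eq_mul_inv]

variable {E : Type*} [NormedAddCommGroup E]

lemma integrableOn_Ioi_of_norm_le_div_sq {f : ℝ → E} (hc : 0 < c) {C : ℝ}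
    (hf : AEStronglyMeasurable f (volume.restrict (Ioi c)))
    (hbound : ∀ t ∈ Ioi c, ‖f t‖ ≤ C / t ^ 2) : IntegrableOn f (Ioi c) :=
  (integrableOn_Ioi_div_sq hc C).mono' hf
    ((ae_restrict_iff' measurableSet_Ioi).2 (ae_of_all _ hbound))

variable [NormedSpace ℝ E]

lemma norm_setIntegral_Ioi_le_div {f : ℝ → E} (hc : 0 < c) {C : ℝ}
    (hbound : ∀ t ∈ Ioi c, ‖f t‖ ≤ C / t ^ 2) : ‖∫ t in Ioi c, f t‖ ≤ C / c := by
  rw [← integral_Ioi_div_sq hc C]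
  exact norm_integral_le_of_norm_le (integrableOn_Ioi_div_sq hc C)
    ((ae_restrict_iff' measurableSet_Ioi).2 (ae_of_all _ hbound))

end InverseSquare

lemma norm_vd_le (s t : ℝ) : ‖vd s t‖ ≤ 6 * |s| / t ^ 2 := by
  rcases eq_or_ne t 0 with rfl | ht
  · simp [vd]
  have htpos : 0 < |t| := abs_pos.2 ht
  set E := cexp (-Complex.I * s * t)
  have hfirst : ‖(Complex.I * s * E - Complex.I * s) / (t : ℂ) ^ 2‖ ≤ 2 * |s| / t ^ 2 := by
    rw [show Complex.I * s * E - Complex.I * s = Complex.I * s * (E - 1) by ring, norm_div,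
      norm_mul, norm_mul, norm_pow, Complex.norm_I, Complex.norm_real, Real.norm_eq_abs,
      Complex.norm_real, Real.norm_eq_abs, sq_abs, one_mul]
    have : ‖E - 1‖ ≤ 2 := (norm_sub_le _ _).trans (by rw [norm_cexp_neg_I_mul]; norm_num)
    refine div_le_div_of_nonneg_right ?_ (sq_nonneg t)
    nlinarith [abs_nonneg s]
  have hsecond : ‖2 * (1 - Complex.I * s * t - E) / (t : ℂ) ^ 3‖ ≤ 4 * |s| / t ^ 2 := by
    have hnum : ‖1 - Complex.I * s * t - E‖ ≤ 2 * (|s| * |t|) := by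
      calc ‖1 - Complex.I * s * t - E‖ = ‖(1 - E) - Complex.I * s * t‖ := by ring_nf
        _ ≤ ‖1 - E‖ + ‖Complex.I * s * t‖ := norm_sub_le _ _
        _ ≤ |s * t| + |s| * |t| := by
          gcongr
          · exact norm_one_sub_cexp_neg_I_mul_le s t
          · simp
        _ = 2 * (|s| * |t|) := by rw [abs_mul]; ring
    rw [norm_div, norm_mul, norm_pow, Complex.norm_real, Real.norm_eq_abs, Complex.norm_ofNat,
      div_le_div_iff₀ (by positivity) (by positivity)]
    calc 2 * ‖1 - Complex.I * s * t - E‖ * t ^ 2 ≤ 2 * (2 * (|s| * |t|)) * |t| ^ 2 := by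
          rw [sq_abs]; gcongr
      _ = 4 * |s| * |t| ^ 3 := by ring
  rw [vd, if_neg ht]
  calc _ ≤ _ := norm_sub_le _ _
    _ ≤ 2 * |s| / t ^ 2 + 4 * |s| / t ^ 2 := add_le_add hfirst hsecond
    _ = 6 * |s| / t ^ 2 := by ring

lemma measurable_vd (s : ℝ) : Measurable (vd s) :=
  Measurable.ite (measurableSet_eq_fun measurable_id measurable_const) measurable_const
    (by fun_prop)

lemma cexp_mul_vd_sub_vd {s h t : ℝ} (ht : t ≠ 0) :
    cexp (Complex.I * s * t) * (vd s t - vd (s + h) t)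
      = Complex.I * s * (1 - cexp (-Complex.I * h * t)) / (t : ℂ) ^ 2
        - Complex.I * h * (cexp (-Complex.I * h * t) + cexp (Complex.I * s * t)) / (t : ℂ) ^ 2
        + 2 * (1 - cexp (-Complex.I * h * t)) / (t : ℂ) ^ 3 := by
  have ht' : (t : ℂ) ≠ 0 := by exact_mod_cast ht
  have hsplit : cexp (-Complex.I * ↑(s + h) * t)
      = cexp (-Complex.I * s * t) * cexp (-Complex.I * h * t) := by
    rw [← Complex.exp_add]; push_cast; ring_nf
  have hinv : cexp (Complex.I * s * t) * cexp (-Complex.I * s * t) = 1 := by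
    rw [← Complex.exp_add]; ring_nf; exact Complex.exp_zero
  rw [vd, vd, if_neg ht, if_neg ht, hsplit]
  set P := cexp (Complex.I * s * t)
  set E := cexp (-Complex.I * s * t)
  set e := cexp (-Complex.I * h * t)
  field_simp
  push_cast
  linear_combination
    (Complex.I * s * t - Complex.I * s * t * e - Complex.I * t * h * e + 2 - 2 * e) * hinv

lemma norm_cexp_mul_vd_sub_vd_sub_le {s h t : ℝ} (ht : t ≠ 0) :
    ‖cexp (Complex.I * s * t) * (vd s t - vd (s + h) t)
      - Complex.I * s * (1 - cexp (-Complex.I * h * t)) / (t : ℂ) ^ 2‖ ≤ 4 * |h| / t ^ 2 := by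
  have htpos : 0 < |t| := abs_pos.2 ht
  have hfirst : ‖Complex.I * h * (cexp (-Complex.I * h * t) + cexp (Complex.I * s * t))
      / (t : ℂ) ^ 2‖ ≤ 2 * |h| / t ^ 2 := by
    rw [norm_div, norm_mul, norm_mul, norm_pow, Complex.norm_I, Complex.norm_real,
      Real.norm_eq_abs, Complex.norm_real, Real.norm_eq_abs, sq_abs, one_mul]
    have : ‖cexp (-Complex.I * h * t) + cexp (Complex.I * s * t)‖ ≤ 2 :=
      (norm_add_le _ _).trans (by rw [norm_cexp_neg_I_mul, norm_cexp_I_mul]; norm_num)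
    refine div_le_div_of_nonneg_right ?_ (sq_nonneg t)
    nlinarith [abs_nonneg h]
  have hsecond : ‖2 * (1 - cexp (-Complex.I * h * t)) / (t : ℂ) ^ 3‖ ≤ 2 * |h| / t ^ 2 := by
    rw [norm_div, norm_mul, norm_pow, Complex.norm_real, Real.norm_eq_abs, Complex.norm_ofNat,
      div_le_div_iff₀ (by positivity) (by positivity)]
    calc 2 * ‖1 - cexp (-Complex.I * h * t)‖ * t ^ 2 ≤ 2 * (|h| * |t|) * |t| ^ 2 := by
          rw [sq_abs, ← abs_mul]; gcongr; exact norm_one_sub_cexp_neg_I_mul_le h t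
      _ = 2 * |h| * |t| ^ 3 := by ring
  rw [cexp_mul_vd_sub_vd ht, add_sub_right_comm, sub_sub_cancel_left, neg_add_eq_sub]
  calc _ ≤ _ := norm_sub_le _ _
    _ ≤ 2 * |h| / t ^ 2 + 2 * |h| / t ^ 2 := add_le_add hsecond hfirst
    _ = 4 * |h| / t ^ 2 := by ring

section Modulation

variable {ρ : ℝ → ℝ}

noncomputable def modulate (ρ : ℝ → ℝ) (s t : ℝ) : ℂ := cexp (Complex.I * s * t) * ρ t

lemma norm_modulate (ρ : ℝ → ℝ) (s t : ℝ) : ‖modulate ρ s t‖ = |ρ t| := by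
  rw [modulate, norm_mul, Complex.norm_real, Real.norm_eq_abs, norm_cexp_I_mul, one_mul]

lemma continuous_modulate (hρ : Continuous ρ) (s : ℝ) : Continuous (modulate ρ s) := by
  unfold modulate; fun_prop

lemma bcR_modulate (hρ : Continuous ρ) (hbot : Tendsto ρ atBot (𝓝 0))
    (htop : Tendsto ρ atTop (𝓝 0)) (s : ℝ) : BcR (modulate ρ s) := by
  refine ⟨continuous_modulate hρ s, ?_, 0, ?_⟩ <;> rw [tendsto_zero_iff_norm_tendsto_zero] <;>
    simp only [norm_modulate]
  · simpa using hbot.abs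
  · simpa using htop.abs

lemma integrable_modulate_mul_vd (hρ : Continuous ρ) (hρ_abs : ∀ t, |ρ t| ≤ 1)
    (hρ_supp : ∀ t ≤ 1, ρ t = 0) (s u : ℝ) :
    Integrable (fun t => modulate ρ s t * vd u t) := by
  refine IntegrableOn.integrable_of_forall_notMem_eq_zero (s := Ioi 1) ?_ fun t ht => ?_
  · refine integrableOn_Ioi_of_norm_le_div_sq one_pos (C := 6 * |u|)
      ((continuous_modulate hρ s).measurable.mul (measurable_vd u)).aestronglyMeasurable
      fun t _ => ?_
    rw [norm_mul, norm_modulate]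
    exact (mul_le_of_le_one_left (norm_nonneg _) (hρ_abs t)).trans (norm_vd_le u t)
  · simp [modulate, hρ_supp t (not_lt.1 ht)]

noncomputable def leadingTerm (ρ : ℝ → ℝ) (h : ℝ) : ℂ :=
  ∫ t in Ioi 1, ρ t * (1 - cexp (-Complex.I * h * t)) / (t : ℂ) ^ 2

lemma integrableOn_leadingTerm_integrand (hρ : Continuous ρ) (hρ_abs : ∀ t, |ρ t| ≤ 1)
    (h : ℝ) : IntegrableOn (fun t : ℝ => ρ t * (1 - cexp (-Complex.I * h * t)) / (t : ℂ) ^ 2)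
      (Ioi 1) := by
  refine integrableOn_Ioi_of_norm_le_div_sq one_pos (C := 2)
    (by have := hρ.measurable; fun_prop : Measurable _).aestronglyMeasurable fun t _ => ?_
  rw [norm_div, norm_mul, norm_pow, Complex.norm_real, Real.norm_eq_abs, Complex.norm_real,
    Real.norm_eq_abs, sq_abs]
  refine div_le_div_of_nonneg_right ?_ (sq_nonneg t)
  have : ‖1 - cexp (-Complex.I * h * t)‖ ≤ 2 :=
    (norm_sub_le _ _).trans (by rw [norm_cexp_neg_I_mul]; norm_num)
  nlinarith [hρ_abs t, abs_nonneg (ρ t), norm_nonneg (1 - cexp (-Complex.I * h * t))]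

lemma norm_Om_modulate_sub_sub_le (hρ : Continuous ρ) (hρ_abs : ∀ t, |ρ t| ≤ 1)
    (hρ_supp : ∀ t ≤ 1, ρ t = 0) (s h : ℝ) :
    ‖Om (modulate ρ s) (s + h) - Om (modulate ρ s) s - Complex.I * s * leadingTerm ρ h‖
      ≤ 4 * |h| := by
  have hint := integrable_modulate_mul_vd hρ hρ_abs hρ_supp s
  have hΔ : Om (modulate ρ s) (s + h) - Om (modulate ρ s) s
      = ∫ t in Ioi 1, modulate ρ s t * (vd s t - vd (s + h) t) := by
    rw [Om, Om, setIntegral_eq_integral_of_forall_compl_eq_zero fun t ht => by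
      simp [modulate, hρ_supp t (not_lt.1 ht)]]
    simp only [mul_sub]
    rw [integral_sub (hint s) (hint (s + h))]
    ring
  rw [hΔ, leadingTerm, ← integral_const_mul, ← integral_sub
    (((hint s).sub (hint (s + h))).integrableOn.congr_fun
      (fun t _ => by simp only [Pi.sub_apply, mul_sub]) measurableSet_Ioi)
    ((integrableOn_leadingTerm_integrand hρ hρ_abs h).const_mul _), ← div_one (4 * |h|)]
  refine norm_setIntegral_Ioi_le_div one_pos fun t ht => ?_
  have ht0 : t ≠ 0 := (zero_lt_one.trans ht).ne'
  calc _ = |ρ t| * ‖cexp (Complex.I * s * t) * (vd s t - vd (s + h) t)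
        - Complex.I * s * (1 - cexp (-Complex.I * h * t)) / (t : ℂ) ^ 2‖ := by
        rw [← Real.norm_eq_abs, ← Complex.norm_real, ← norm_mul, modulate]
        ring_nf
    _ ≤ 1 * (4 * |h| / t ^ 2) :=
        mul_le_mul (hρ_abs t) (norm_cexp_mul_vd_sub_vd_sub_le ht0) (norm_nonneg _) zero_le_one
    _ = 4 * |h| / t ^ 2 := one_mul _

lemma im_leadingTerm (hρ : Continuous ρ) (hρ_abs : ∀ t, |ρ t| ≤ 1) (h : ℝ) :
    (leadingTerm ρ h).im = ∫ t in Ioi 1, ρ t * sin (h * t) / t ^ 2 := by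
  refine (integral_im (integrableOn_leadingTerm_integrand hρ hρ_abs h)).symm.trans
    (setIntegral_congr_fun measurableSet_Ioi fun t _ => ?_)
  simp only [RCLike.im_to_complex]
  rw [show (t : ℂ) ^ 2 = ((t ^ 2 : ℝ) : ℂ) by push_cast; rfl, Complex.div_ofReal_im,
    Complex.im_ofReal_mul, im_one_sub_cexp_neg_I_mul]

lemma le_im_leadingTerm (hρ : Continuous ρ) (hρ_nonneg : ∀ t, 0 ≤ ρ t)
    (hρ_abs : ∀ t, |ρ t| ≤ 1) {h : ℝ} (h0 : 0 < h) (h1 : h ≤ 1) :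
    h / 2 * (∫ t in (1 : ℝ)..h⁻¹, ρ t / t) - h ≤ (leadingTerm ρ h).im := by
  set f : ℝ → ℝ := fun t => ρ t * sin (h * t) / t ^ 2
  have hX : 1 ≤ h⁻¹ := one_le_inv₀ h0 |>.2 h1
  have hf_le (t : ℝ) : ‖f t‖ ≤ 1 / t ^ 2 := by
    rw [Real.norm_eq_abs, abs_div, abs_mul, abs_of_nonneg (sq_nonneg t)]
    exact div_le_div_of_nonneg_right
      (mul_le_one₀ (hρ_abs t) (abs_nonneg _) (abs_sin_le_one _)) (sq_nonneg t)
  have hf : IntegrableOn f (Ioi 1) :=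
    integrableOn_Ioi_of_norm_le_div_sq one_pos
      (by have := hρ.measurable; fun_prop : Measurable f).aestronglyMeasurable fun t _ => hf_le t
  have htail : -h ≤ ∫ t in Ioi h⁻¹, f t := by
    have := norm_setIntegral_Ioi_le_div (inv_pos.2 h0) fun t _ => hf_le t
    rw [one_div, inv_inv, Real.norm_eq_abs] at this
    linarith [neg_abs_le (∫ t in Ioi h⁻¹, f t)]
  have hmain : h / 2 * ∫ t in (1 : ℝ)..h⁻¹, ρ t / t ≤ ∫ t in Ioc 1 h⁻¹, f t := by
    rw [← intervalIntegral.integral_of_le hX, ← intervalIntegral.integral_const_mul]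
    refine intervalIntegral.integral_mono_on hX ?_
      ((intervalIntegrable_iff_integrableOn_Ioc_of_le hX).2 (hf.mono_set Ioc_subset_Ioi_self))
      fun t ht => ?_
    · refine (ContinuousOn.intervalIntegrable (μ := volume) (u := fun t => ρ t / t)
        (hρ.continuousOn.div continuousOn_id fun t ht => ?_)).const_mul (h / 2)
      rw [uIcc_of_le hX] at ht
      exact (zero_lt_one.trans_le ht.1).ne'
    · have ht0 : 0 < t := zero_lt_one.trans_le ht.1
      have hht : h * t ≤ 1 := by
        calc h * t ≤ h * h⁻¹ := by gcongr; exact ht.2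
          _ = 1 := mul_inv_cancel₀ h0.ne'
      have hsin := half_le_sin (by positivity) hht
      calc h / 2 * (ρ t / t) = ρ t * (h * t / 2) / t ^ 2 := by field_simp
        _ ≤ ρ t * sin (h * t) / t ^ 2 := by gcongr; exact hρ_nonneg t
  rw [im_leadingTerm hρ hρ_abs, ← Ioc_union_Ioi_eq_Ioi hX,
    setIntegral_union (Ioc_disjoint_Ioi le_rfl) measurableSet_Ioi
      (hf.mono_set Ioc_subset_Ioi_self) (hf.mono_set (Ioi_subset_Ioi hX))]
  linarith

end Modulation

noncomputable def logDecay (t : ℝ) : ℝ :=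
  min (max (t - 1) 0) (log (max t (exp 1)) ^ (-(1 / 4 : ℝ)))

lemma one_le_log_max_exp_one (t : ℝ) : 1 ≤ log (max t (exp 1)) :=
  one_le_log_of_exp_one_le (le_max_right _ _)

lemma logDecay_nonneg (t : ℝ) : 0 ≤ logDecay t :=
  le_min (le_max_right _ _) (rpow_nonneg (zero_le_one.trans (one_le_log_max_exp_one t)) _)

lemma abs_logDecay_le_one (t : ℝ) : |logDecay t| ≤ 1 := by
  rw [abs_of_nonneg (logDecay_nonneg t)]
  exact (min_le_right _ _).trans
    (rpow_le_one_of_one_le_of_nonpos (one_le_log_max_exp_one t) (by norm_num))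

lemma logDecay_of_le_one {t : ℝ} (ht : t ≤ 1) : logDecay t = 0 :=
  le_antisymm ((min_le_left _ _).trans (max_le (by linarith) le_rfl)) (logDecay_nonneg t)

lemma logDecay_of_exp_one_le {t : ℝ} (ht : exp 1 ≤ t) :
    logDecay t = log t ^ (-(1 / 4 : ℝ)) := by
  have h1 : 1 ≤ t - 1 := by linarith [add_one_le_exp 1]
  rw [logDecay, max_eq_left ht, max_eq_left (zero_le_one.trans h1)]
  exact min_eq_right ((rpow_le_one_of_one_le_of_nonpos (one_le_log_of_exp_one_le ht)
    (by norm_num)).trans h1)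

lemma continuous_logDecay : Continuous logDecay := by
  have hlog : Continuous fun t => log (max t (exp 1)) :=
    (continuous_id.max continuous_const).log fun t =>
      ((exp_pos 1).trans_le (le_max_right t _)).ne'
  exact (by fun_prop : Continuous fun t : ℝ => max (t - 1) 0).min
    (hlog.rpow_const fun t => Or.inl (zero_lt_one.trans_le (one_le_log_max_exp_one t)).ne')

lemma tendsto_logDecay_atTop : Tendsto logDecay atTop (𝓝 0) := by
  refine ((tendsto_rpow_neg_atTop (by norm_num : (0 : ℝ) < 1 / 4)).comp
    (tendsto_log_atTop.comp tendsto_id)).congr' ?_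
  filter_upwards [eventually_ge_atTop (exp 1)] with t ht
  exact (logDecay_of_exp_one_le ht).symm

lemma tendsto_logDecay_atBot : Tendsto logDecay atBot (𝓝 0) :=
  tendsto_const_nhds.congr' <| (eventually_le_atBot 1).mono fun _ ht => (logDecay_of_le_one ht).symm

lemma le_integral_logDecay_div {X : ℝ} (hX : exp 1 ≤ X) :
    log X ^ (-(1 / 4 : ℝ)) * (log X - 1) ≤ ∫ t in (1 : ℝ)..X, logDecay t / t := by
  have he : 1 ≤ exp 1 := one_le_exp zero_le_one
  have hint {a b : ℝ} (ha : 1 ≤ a) (hab : a ≤ b) :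
      IntervalIntegrable (fun t => logDecay t / t) volume a b := by
    refine ContinuousOn.intervalIntegrable
      (continuous_logDecay.continuousOn.div continuousOn_id fun t ht => ?_)
    rw [uIcc_of_le hab] at ht
    exact (zero_lt_one.trans_le (ha.trans ht.1)).ne'
  have hhead : 0 ≤ ∫ t in (1 : ℝ)..exp 1, logDecay t / t :=
    intervalIntegral.integral_nonneg he fun t ht =>
      div_nonneg (logDecay_nonneg t) (zero_le_one.trans ht.1)
  have hmain : log X ^ (-(1 / 4 : ℝ)) * (log X - 1) ≤ ∫ t in exp 1..X, logDecay t / t := by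
    have hconst : ∫ t in exp 1..X, log X ^ (-(1 / 4 : ℝ)) * t⁻¹
        = log X ^ (-(1 / 4 : ℝ)) * (log X - 1) := by
      rw [intervalIntegral.integral_const_mul, integral_inv_of_pos (exp_pos 1)
        ((exp_pos 1).trans_le hX), log_div ((exp_pos 1).trans_le hX).ne' (exp_pos 1).ne',
        log_exp]
    rw [← hconst]
    refine intervalIntegral.integral_mono_on hX ?_ (hint he hX) fun t ht => ?_
    · refine (intervalIntegral.intervalIntegrable_inv (fun t ht => ?_)
        continuousOn_id).const_mul _
      rw [uIcc_of_le hX] at ht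
      exact ((exp_pos 1).trans_le ht.1).ne'
    · have ht0 : 0 < t := (exp_pos 1).trans_le ht.1
      rw [logDecay_of_exp_one_le ht.1, ← div_eq_mul_inv]
      exact div_le_div_of_nonneg_right (rpow_le_rpow_of_nonpos
        (zero_lt_one.trans_le (one_le_log_of_exp_one_le ht.1)) (log_le_log ht0 ht.2)
        (by norm_num : -(1 / 4 : ℝ) ≤ 0)) ht0.le
  rw [← intervalIntegral.integral_add_adjacent_intervals (hint le_rfl he) (hint he hX)]
  linarith

lemma eventually_exp_one_le_inv : ∀ᶠ h in 𝓝[>] (0 : ℝ), 0 < h ∧ exp 1 ≤ h⁻¹ := by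
  filter_upwards [Ioo_mem_nhdsGT (inv_pos.2 (exp_pos 1))] with h hh
  exact ⟨hh.1, (le_inv_comm₀ hh.1 (exp_pos 1)).1 hh.2.le⟩

lemma abs_log_eq_log_inv {h : ℝ} (he : exp 1 ≤ h⁻¹) : |log h| = log h⁻¹ := by
  rw [← abs_neg, ← log_inv, abs_of_nonneg (zero_le_one.trans (one_le_log_of_exp_one_le he))]

lemma le_norm_Om_modulate_logDecay_sub {s h : ℝ} (hs : 0 ≤ s) (h0 : 0 < h)
    (he : exp 1 ≤ h⁻¹) :
    s * (h / 2 * (log h⁻¹ ^ (-(1 / 4 : ℝ)) * (log h⁻¹ - 1)) - h) - 4 * h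
      ≤ ‖Om (modulate logDecay s) (s + h) - Om (modulate logDecay s) s‖ := by
  have h1 : h ≤ 1 := (one_le_inv₀ h0).1 ((one_le_exp zero_le_one).trans he)
  have herr := norm_Om_modulate_sub_sub_le continuous_logDecay abs_logDecay_le_one
    (fun _ => logDecay_of_le_one) s h
  have him := le_im_leadingTerm continuous_logDecay logDecay_nonneg abs_logDecay_le_one h0 h1
  have hlog := le_integral_logDecay_div he
  have hnorm : ‖Complex.I * s * leadingTerm logDecay h‖ = s * ‖leadingTerm logDecay h‖ := by
    rw [norm_mul, norm_mul, Complex.norm_I, one_mul, Complex.norm_real, Real.norm_eq_abs,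
      abs_of_nonneg hs]
  have htriangle := norm_sub_norm_le (Complex.I * s * leadingTerm logDecay h)
    (Om (modulate logDecay s) (s + h) - Om (modulate logDecay s) s)
  rw [norm_sub_rev (Complex.I * s * leadingTerm logDecay h)] at htriangle
  calc s * (h / 2 * (log h⁻¹ ^ (-(1 / 4 : ℝ)) * (log h⁻¹ - 1)) - h) - 4 * h
      ≤ s * (leadingTerm logDecay h).im - 4 * h := by
        gcongr
        linarith [mul_le_mul_of_nonneg_left hlog (half_pos h0).le]
    _ ≤ ‖Complex.I * s * leadingTerm logDecay h‖ - 4 * |h| := by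
        rw [hnorm, abs_of_pos h0]; gcongr; exact Complex.im_le_norm _
    _ ≤ _ := by linarith

lemma le_norm_Om_modulate_logDecay_sub_div {s h : ℝ} (hs : 0 ≤ s) (h0 : 0 < h)
    (he : exp 1 ≤ h⁻¹) :
    s / 2 * log h⁻¹ ^ (1 / 4 : ℝ) - (2 * s + 4)
      ≤ ‖Om (modulate logDecay s) (s + h) - Om (modulate logDecay s) s‖
        / (h * |log h| ^ ((1 : ℝ) / 2)) := by
  have hL := one_le_log_of_exp_one_le he
  set u := log h⁻¹ ^ (1 / 4 : ℝ) with hu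
  have hu1 : 1 ≤ u := one_le_rpow hL (by norm_num)
  have hpow (n : ℕ) : log h⁻¹ ^ ((1 / 4 : ℝ) * n) = u ^ n := by
    rw [rpow_mul (zero_le_one.trans hL), rpow_natCast]
  have hL4 : log h⁻¹ = u ^ 4 := by
    rw [← hpow 4]; norm_num
  have hsqrt : |log h| ^ ((1 : ℝ) / 2) = u ^ 2 := by
    rw [abs_log_eq_log_inv he, ← hpow 2]; norm_num
  have hinv : log h⁻¹ ^ (-(1 / 4 : ℝ)) = u⁻¹ := rpow_neg (zero_le_one.trans hL) _
  have hmain := le_norm_Om_modulate_logDecay_sub hs h0 he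
  rw [hinv, hL4] at hmain
  rw [hsqrt, le_div_iff₀ (by positivity)]
  refine le_trans ?_ hmain
  have hw : u⁻¹ * (u ^ 4 - 1) = u ^ 3 - u⁻¹ := by field_simp
  have hw1 : u⁻¹ ≤ 1 := inv_le_one_of_one_le₀ hu1
  rw [hw]
  nlinarith [mul_nonneg (mul_nonneg hs h0.le) (sub_nonneg.2 hw1),
    mul_nonneg (mul_nonneg hs h0.le) (sub_nonneg.2 (one_le_pow₀ (n := 2) hu1)),
    mul_nonneg h0.le (sub_nonneg.2 (one_le_pow₀ (n := 2) hu1))]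

lemma tendsto_norm_Om_modulate_logDecay_sub_div {s : ℝ} (hs : 0 < s) :
    Tendsto (fun h => ‖Om (modulate logDecay s) (s + h) - Om (modulate logDecay s) s‖
      / (h * |log h| ^ ((1 : ℝ) / 2))) (𝓝[>] 0) atTop := by
  have hL : Tendsto (fun h : ℝ => log h⁻¹) (𝓝[>] 0) atTop :=
    (tendsto_neg_atBot_atTop.comp tendsto_log_nhdsGT_zero).congr fun h => (log_inv h).symm
  have hlower :
      Tendsto (fun h => s / 2 * log h⁻¹ ^ (1 / 4 : ℝ) - (2 * s + 4)) (𝓝[>] 0) atTop := by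
    simp only [sub_eq_add_neg]
    exact tendsto_atTop_add_const_right _ _
      (((tendsto_rpow_atTop (by norm_num : (0 : ℝ) < 1 / 4)).comp hL).const_mul_atTop
        (by positivity : 0 < s / 2))
  refine tendsto_atTop_mono' _ ?_ hlower
  filter_upwards [eventually_exp_one_le_inv] with h ⟨h0, he⟩
  exact le_norm_Om_modulate_logDecay_sub_div hs.le h0 he

lemma not_lipschitzWith_of_tendsto {E : Type*} [SeminormedAddCommGroup E] {f : ℝ → E} {s : ℝ}
    (hf : Tendsto (fun h => ‖f (s + h) - f s‖ / (h * |log h| ^ ((1 : ℝ) / 2)))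
      (𝓝[>] 0) atTop) :
    ¬ ∃ K : NNReal, LipschitzWith K f := by
  rintro ⟨K, hK⟩
  obtain ⟨h, hlarge, h0, he⟩ :=
    ((hf.eventually_gt_atTop K).and eventually_exp_one_le_inv).exists
  have hw : 1 ≤ |log h| ^ ((1 : ℝ) / 2) :=
    one_le_rpow ((abs_log_eq_log_inv he).ge.trans' (one_le_log_of_exp_one_le he)) (by norm_num)
  have hlip : ‖f (s + h) - f s‖ ≤ K * h := by
    simpa [dist_eq_norm, abs_of_pos h0] using hK.dist_le_mul (s + h) s
  have : ‖f (s + h) - f s‖ / (h * |log h| ^ ((1 : ℝ) / 2)) ≤ K := by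
    rw [div_le_iff₀ (by positivity)]
    nlinarith [mul_le_mul_of_nonneg_left hw (mul_nonneg K.coe_nonneg h0.le)]
  linarith

theorem stmt6 :
    (∀ s : ℝ, 0 < s → ∃ F : ℝ → ℂ, BcR F ∧
      ∀ M : ℝ, ∃ᶠ h in 𝓝[>] (0:ℝ),
        M < ‖Om F (s+h) - Om F s‖ / (h * |Real.log h| ^ ((1:ℝ)/2))) ∧
    ∃ F : ℝ → ℂ, BcR F ∧ ¬ ∃ K : NNReal, LipschitzWith K (Om F) := by
  have hF (s : ℝ) : BcR (modulate logDecay s) :=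
    bcR_modulate continuous_logDecay tendsto_logDecay_atBot tendsto_logDecay_atTop s
  exact ⟨fun s hs => ⟨modulate logDecay s, hF s, fun M =>
      ((tendsto_norm_Om_modulate_logDecay_sub_div hs).eventually_gt_atTop M).frequently⟩,
    modulate logDecay 1, hF 1,
    not_lipschitzWith_of_tendsto (tendsto_norm_Om_modulate_logDecay_sub_div one_pos)⟩
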